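/- arXiv:1410.2194 — 3 statements merged into one kernel-verified Lean document; each statement's English description precedes it below -/
import Mathlib

section
/- Let M = M(G,n,m;P) be a finite completely simple semigroup, i.e., the Rees matrix semigroup without zero over a finite group G whose sandwich matrix P has all entries in G. Then M/η* is a finite nilpotent group: there exists a finite nilpotent group H and a semigroup isomorphism M/η* ≅ H. -/
/-! Common definitions: Mal'cev nilpotency, the relations η_n, η, the congruence η*,
Rees matrix semigroups (with and without zero), regularity, CS-diagonality,
the row relation ~, ideals, principal series and Rees factor isomorphisms. -/

/-- The pair `(λ_n, ρ_n)` of Mal'cev words in a monoid, with `λ₀ = x`, `ρ₀ = y`,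
`λ_{k+1} = λ_k * z (k+1) * ρ_k` and `ρ_{k+1} = ρ_k * z (k+1) * λ_k`. -/
def malcev {M : Type*} [Monoid M] (x y : M) (z : ℕ → M) : ℕ → M × M
  | 0 => (x, y)
  | k + 1 =>
      ((malcev x y z k).1 * z (k + 1) * (malcev x y z k).2,
       (malcev x y z k).2 * z (k + 1) * (malcev x y z k).1)

/-- A semigroup `S` is Mal'cev nilpotent if for some positive `n`,
`λ_n(a,b,c₁,…,c_n) = ρ_n(a,b,c₁,…,c_n)` for all `a b ∈ S` and all `cᵢ ∈ S¹`,
where `S¹ = WithOne S`. -/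
def MalcevNilpotent (S : Type*) [Semigroup S] : Prop :=
  ∃ n : ℕ, 0 < n ∧ ∀ (a b : S) (z : ℕ → WithOne S),
    (malcev (a : WithOne S) (b : WithOne S) z n).1 =
    (malcev (a : WithOne S) (b : WithOne S) z n).2

/-- The relation `η_n` on a semigroup `S`: `η₁` is the diagonal, and for `n > 1`,
`x η_n y` iff there are `z₁, …, z_n ∈ S¹` with `x = λ_n(x,y,z₁,…,z_n)` and
`y = ρ_n(x,y,z₁,…,z_n)`. -/
def etaN (S : Type*) [Semigroup S] (n : ℕ) (x y : S) : Prop :=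
  (n = 1 ∧ x = y) ∨
  (1 < n ∧ ∃ z : ℕ → WithOne S,
    (x : WithOne S) = (malcev (x : WithOne S) (y : WithOne S) z n).1 ∧
    (y : WithOne S) = (malcev (x : WithOne S) (y : WithOne S) z n).2)

/-- `η`, the transitive closure of the union of the relations `η_n`, `n ≥ 1`. -/
def eta (S : Type*) [Semigroup S] : S → S → Prop :=
  Relation.TransGen (fun x y => ∃ n, 1 ≤ n ∧ etaN S n x y)

/-- `η*`, the smallest congruence on `S` containing `η`. -/
def etaStar (S : Type*) [Semigroup S] : Con S :=
  conGen (eta S)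

/-- A semigroup is an inverse semigroup if every element has exactly one inverse. -/
def IsInverseSemigroup (S : Type*) [Semigroup S] : Prop :=
  ∀ x : S, ∃! y : S, x * y * x = x ∧ y * x * y = y

/-- A semigroup is completely regular if every element lies in a subgroup:
for every `a` there is `b` with `aba = a`, `ab = ba` and `bab = b`. -/
def IsCompletelyRegular (S : Type*) [Semigroup S] : Prop :=
  ∀ a : S, ∃ b : S, a * b * a = a ∧ a * b = b * a ∧ b * a * b = b

/-- A (possibly empty) two-sided ideal of a semigroup. -/
def IsIdeal (S : Type*) [Semigroup S] (I : Set S) : Prop :=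
  ∀ s : S, ∀ x ∈ I, s * x ∈ I ∧ x * s ∈ I

/-- The Rees matrix semigroup `M⁰(G, n, m; P)` with zero `theta`; the sandwich
matrix entry `P j i : Option G` is `none` when the entry is `θ`. -/
inductive ReesMatrix (G : Type*) (n m : ℕ) (P : Fin m → Fin n → Option G) where
  | theta : ReesMatrix G n m P
  | elem (g : G) (i : Fin n) (j : Fin m) : ReesMatrix G n m P

namespace ReesMatrix

variable {G : Type*} [Group G] {n m : ℕ} {P : Fin m → Fin n → Option G}

/-- Multiplication: `(g;i,j)(h;k,l) = (g p_{j,k} h; i, l)` if `p_{j,k} ≠ θ`,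
and all other products are `θ`. -/
def mul : ReesMatrix G n m P → ReesMatrix G n m P → ReesMatrix G n m P
  | elem g i j, elem h k l =>
      match P j k with
      | some p => elem (g * p * h) i l
      | none => theta
  | _, _ => theta

instance : Semigroup (ReesMatrix G n m P) where
  mul := mul
  mul_assoc a b c := by
    show mul (mul a b) c = mul a (mul b c)
    rcases a with _ | ⟨g, i, j⟩ <;> rcases b with _ | ⟨h, k, l⟩ <;>
      rcases c with _ | ⟨f, r, s⟩
    all_goals try rfl
    · rcases hjk : P j k with _ | p <;> simp [mul, hjk]
    · rcases hjk : P j k with _ | p <;> rcases hlr : P l r with _ | q <;>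
        simp [mul, hjk, hlr, mul_assoc]

theorem mul_def (a b : ReesMatrix G n m P) : a * b = mul a b := rfl

instance [Finite G] : Finite (ReesMatrix G n m P) := by
  have := Fintype.ofFinite G
  exact Finite.of_surjective
    (fun x : Option (G × Fin n × Fin m) =>
      match x with
      | none => (theta : ReesMatrix G n m P)
      | some (g, i, j) => elem g i j)
    (by rintro (_ | ⟨g, i, j⟩)
        · exact ⟨none, rfl⟩
        · exact ⟨some (g, i, j), rfl⟩)

end ReesMatrix

/-- `P` is regular: every row and every column of the sandwich matrix has a
nonzero entry. -/
def IsRegularSandwich {G : Type*} {n m : ℕ} (P : Fin m → Fin n → Option G) : Prop :=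
  (∀ i : Fin n, ∃ j : Fin m, P j i ≠ none) ∧ (∀ j : Fin m, ∃ i : Fin n, P j i ≠ none)

/-- `P` is CS-diagonal: whenever `p_{r,t}`, `p_{r',t}` and `p_{r,t'}` are all
nonzero, so is `p_{r',t'}`. -/
def IsCSDiagonal {G : Type*} {n m : ℕ} (P : Fin m → Fin n → Option G) : Prop :=
  ∀ (r r' : Fin m) (t t' : Fin n),
    P r t ≠ none → P r' t ≠ none → P r t' ≠ none → P r' t' ≠ none

/-- The relation `~` on rows: `i ~ i'` iff some column `j` has `p_{j,i} ≠ θ`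
and `p_{j,i'} ≠ θ`. -/
def rowRel {G : Type*} {n m : ℕ} (P : Fin m → Fin n → Option G) (i i' : Fin n) : Prop :=
  ∃ j : Fin m, P j i ≠ none ∧ P j i' ≠ none

/-- The completely simple Rees matrix semigroup `M(G, n, m; P)` (without zero),
all sandwich entries lying in `G`. -/
inductive ReesMatrixCS (G : Type*) (n m : ℕ) (P : Fin m → Fin n → G) where
  | elem (g : G) (i : Fin n) (j : Fin m) : ReesMatrixCS G n m P

namespace ReesMatrixCS

variable {G : Type*} [Group G] {n m : ℕ} {P : Fin m → Fin n → G}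

instance : Semigroup (ReesMatrixCS G n m P) where
  mul a b := match a, b with
    | elem g i j, elem h k l => elem (g * P j k * h) i l
  mul_assoc a b c := by
    rcases a with ⟨g, i, j⟩; rcases b with ⟨h, k, l⟩; rcases c with ⟨f, r, s⟩
    show elem _ _ _ = elem _ _ _
    simp [mul_assoc]

instance [Finite G] : Finite (ReesMatrixCS G n m P) := by
  have := Fintype.ofFinite G
  exact Finite.of_surjective
    (fun x : G × Fin n × Fin m => elem x.1 x.2.1 x.2.2)
    (by rintro ⟨g, i, j⟩; exact ⟨(g, i, j), rfl⟩)

end ReesMatrixCS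

/-- A principal series of a finite semigroup `S`:
`S = C 1 ⊃ C 2 ⊃ … ⊃ C o ⊃ C (o+1) = ∅`, each `C p` an ideal of `S` with
no ideal of `S` strictly between consecutive terms. -/
structure PrincipalSeries (S : Type*) [Semigroup S] where
  o : ℕ
  ho : 1 ≤ o
  C : ℕ → Set S
  first : C 1 = Set.univ
  last : C (o + 1) = ∅
  isIdeal : ∀ p, 1 ≤ p → p ≤ o → IsIdeal S (C p)
  strict : ∀ p, 1 ≤ p → p ≤ o → C (p + 1) ⊂ C p
  max : ∀ p, 1 ≤ p → p ≤ o → ∀ I : Set S, IsIdeal S I →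
    C (p + 1) ⊆ I → I ⊆ C p → I = C (p + 1) ∨ I = C p

/-- `f` realises the Rees factor `A/B` (the Rees quotient of `A` by the ideal `B`;
if `B = ∅` the factor is `A` itself) as the Rees matrix semigroup with zero
`M⁰(H, n', m'; Q)`. -/
def IsReesFactorM0 {S : Type*} [Semigroup S] (A B : Set S)
    {H : Type*} [Group H] {n' m' : ℕ} (Q : Fin m' → Fin n' → Option H)
    (f : S → ReesMatrix H n' m' Q) : Prop :=
  (∀ x ∈ A, ∀ y ∈ A, f (x * y) = f x * f y) ∧
  ((B = ∅ ∧ Set.BijOn f A Set.univ) ∨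
   (B ≠ ∅ ∧ (∀ x ∈ B, f x = ReesMatrix.theta) ∧
     (∀ x ∈ A \ B, f x ≠ ReesMatrix.theta) ∧
     Set.InjOn f (A \ B) ∧
     (∀ w : ReesMatrix H n' m' Q, w ≠ ReesMatrix.theta → ∃ x ∈ A \ B, f x = w)))

/-- `f` realises `A` as the completely simple Rees matrix semigroup
`M(H, n', m'; Q)` (without zero). -/
def IsReesFactorCS {S : Type*} [Semigroup S] (A : Set S)
    {H : Type*} [Group H] {n' m' : ℕ} (Q : Fin m' → Fin n' → H)
    (f : S → ReesMatrixCS H n' m' Q) : Prop :=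
  (∀ x ∈ A, ∀ y ∈ A, f (x * y) = f x * f y) ∧ Set.BijOn f A Set.univ


/-! In `M(G,n,m;P)` two idempotents `(p_{j,i}⁻¹; i, j)` sharing a row or a column form an
η₂-pair, so η* identifies all idempotents and `M/η*` is a group. An η-pair of this finite
image lifts, by pigeonhole along a periodically repeated Mal'cev sequence, to an η-pair of `M`,
so the group `M/η*` has only trivial η-pairs. Such a finite group is nilpotent: were its centre
trivial, every pair `u ≠ v` could be kept distinct by a Mal'cev step (through an element not
commuting with `u v⁻¹`), and iterating this in a finite group produces a nontrivial η-pair;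
so the centre is nontrivial and one inducts on `K ⧸ Z(K)`. -/

section Malcev

variable {M : Type*} [Monoid M]

theorem malcev_add (x y : M) (z : ℕ → M) (s : ℕ) :
    ∀ t, malcev x y z (s + t) =
      malcev (malcev x y z s).1 (malcev x y z s).2 (fun j => z (s + j)) t
  | 0 => rfl
  | t + 1 => by
      rw [← Nat.add_assoc, malcev, malcev_add x y z s t, malcev, Nat.add_assoc]

theorem malcev_congr (x y : M) {z z' : ℕ → M} :
    ∀ t, (∀ j, 1 ≤ j → j ≤ t → z j = z' j) → malcev x y z t = malcev x y z' t
  | 0, _ => rfl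
  | t + 1, h => by
      rw [malcev, malcev, malcev_congr x y t (fun j h1 h2 => h j h1 (by omega)),
        h (t + 1) (by omega) le_rfl]

theorem map_malcev {N : Type*} [Monoid N] (F : M →* N) (x y : M) (z : ℕ → M) :
    ∀ t, Prod.map F F (malcev x y z t) = malcev (F x) (F y) (fun j => F (z j)) t
  | 0 => rfl
  | t + 1 => by simp only [malcev, Prod.map, map_mul, ← map_malcev F x y z t]

/-- `fun t => z ((t - 1) % k + 1)` repeats `z₁, …, z_k` periodically. -/
theorem malcev_periodic_mul {x y : M} {z : ℕ → M} {k : ℕ}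
    (hfix : malcev x y z k = (x, y)) (c : ℕ) :
    malcev x y (fun t => z ((t - 1) % k + 1)) (k * c) = (x, y) := by
  induction c with
  | zero => rfl
  | succ c ih =>
    rw [Nat.mul_succ, malcev_add, ih]
    conv_rhs => rw [← hfix]
    refine malcev_congr x y k fun j h1 h2 => ?_
    rw [show k * c + j - 1 = j - 1 + k * c by omega, Nat.add_mul_mod_self_left,
      Nat.mod_eq_of_lt (by omega), Nat.sub_add_cancel h1]

end Malcev

section EtaPair

variable {S : Type*} [Semigroup S]

/-- `a η_k b` for some `k > 1`, with the defining identities packed as one equation of pairs. -/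
def IsEtaPair (S : Type*) [Semigroup S] (a b : S) : Prop :=
  ∃ k, 1 < k ∧ ∃ z : ℕ → WithOne S, malcev (a : WithOne S) b z k = (↑a, ↑b)

theorem etaStar_of_isEtaPair {a b : S} (h : IsEtaPair S a b) : etaStar S a b := by
  obtain ⟨k, hk, z, hz⟩ := h
  exact ConGen.Rel.of _ _
    (Relation.TransGen.single ⟨k, hk.le, Or.inr ⟨hk, z, by rw [hz], by rw [hz]⟩⟩)

theorem isEtaPair_of_mul_mul_fixed {a b : S} (c : S) (ha : a * c * b = a) (hb : b * c * a = b) :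
    IsEtaPair S a b :=
  ⟨2, one_lt_two, fun _ => c, by simp only [malcev, ← WithOne.coe_mul, ha, hb]⟩

theorem isEtaPair_of_mul_mul_swap {a b : S} (c : S) (ha : a * c * b = b) (hb : b * c * a = a) :
    IsEtaPair S a b :=
  ⟨2, one_lt_two, fun _ => c, by simp only [malcev, ← WithOne.coe_mul, ha, hb]⟩

theorem exists_malcev_eq_coe (x y : S) (z : ℕ → WithOne S) :
    ∀ t, ∃ a b : S, malcev (x : WithOne S) y z t = (↑a, ↑b)
  | 0 => ⟨x, y, rfl⟩
  | t + 1 => by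
    obtain ⟨a, b, h⟩ := exists_malcev_eq_coe x y z t
    rw [malcev, h]
    induction z (t + 1) using WithOne.cases_on
    · exact ⟨a * b, b * a, by simp [← WithOne.coe_mul]⟩
    · intro c
      exact ⟨a * c * b, b * c * a, by simp [← WithOne.coe_mul]⟩

/-- Pigeonhole on the finitely many pairs; sampling at multiples of `d > 1` makes the period
of the repetition exceed `1`. -/
theorem exists_malcev_eq_isEtaPair [Finite S] (x y : S) (z : ℕ → WithOne S) {d : ℕ}
    (hd : 1 < d) :
    ∃ c, ∃ a b : S, malcev (x : WithOne S) y z (d * c) = (↑a, ↑b) ∧ IsEtaPair S a b := by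
  have : Finite (WithOne S) := inferInstanceAs (Finite (Option S))
  obtain ⟨i, j, hne, heq⟩ :=
    Finite.exists_ne_map_eq_of_infinite fun c => malcev (x : WithOne S) y z (d * c)
  wlog hij : i < j generalizing i j
  · exact this j i hne.symm heq.symm (hne.lt_or_gt.resolve_left hij)
  obtain ⟨a, b, hab⟩ := exists_malcev_eq_coe x y z (d * i)
  refine ⟨i, a, b, hab, d * (j - i), ?_, fun t => z (d * i + t), ?_⟩
  · nlinarith [Nat.sub_pos_of_lt hij]
  · have hsplit := malcev_add (x : WithOne S) y z (d * i) (d * (j - i))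
    rw [← Nat.mul_add, Nat.add_sub_cancel' hij.le, ← heq, hab] at hsplit
    exact hsplit.symm

theorem exists_ne_isEtaPair [Finite S]
    (h : ∀ u v : S, u ≠ v → ∃ c : S, u * c * v ≠ v * c * u) {x y : S} (hxy : x ≠ y) :
    ∃ a b : S, a ≠ b ∧ IsEtaPair S a b := by
  choose c hc using h
  let step : {p : S × S // p.1 ≠ p.2} → {p : S × S // p.1 ≠ p.2} := fun p =>
    ⟨(p.1.1 * c _ _ p.2 * p.1.2, p.1.2 * c _ _ p.2 * p.1.1), hc _ _ p.2⟩
  let pairs : ℕ → {p : S × S // p.1 ≠ p.2} := fun t => step^[t] ⟨(x, y), hxy⟩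
  let z : ℕ → WithOne S := fun t => c _ _ (pairs (t - 1)).2
  have malcev_eq : ∀ t, malcev (x : WithOne S) y z t = (↑(pairs t).1.1, ↑(pairs t).1.2) := by
    intro t
    induction t with
    | zero => rfl
    | succ t ih =>
      simp only [malcev, ih, pairs, Function.iterate_succ_apply']
      simp [step, z, pairs, ← WithOne.coe_mul]
  obtain ⟨t, a, b, hab, hpair⟩ := exists_malcev_eq_isEtaPair x y z one_lt_two
  rw [malcev_eq, Prod.mk.injEq, WithOne.coe_inj, WithOne.coe_inj] at hab
  exact ⟨a, b, hab.1 ▸ hab.2 ▸ (pairs _).2, hpair⟩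

/-- Lift the periodically repeated Mal'cev sequence of an η-pair `(x, y)` of `N`: by pigeonhole
it passes through an η-pair of `S`, which maps to `(x, y)`. -/
theorem eq_of_isEtaPair_of_surjective {N : Type*} [Semigroup N] [Finite S] (f : S →ₙ* N)
    (hf : Function.Surjective f) (hS : ∀ a b, IsEtaPair S a b → f a = f b) {x y : N}
    (hxy : IsEtaPair N x y) : x = y := by
  obtain ⟨k, hk, z, hz⟩ := hxy
  have hF : Function.Surjective (WithOne.mapMulHom f) := by
    intro w
    induction w using WithOne.cases_on
    · exact ⟨1, map_one _⟩
    · intro w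
      obtain ⟨v, rfl⟩ := hf w
      exact ⟨v, WithOne.mapMulHom_coe f v⟩
  choose Z hZ using hF
  obtain ⟨x₀, rfl⟩ := hf x
  obtain ⟨y₀, rfl⟩ := hf y
  obtain ⟨c, a, b, hab, hpair⟩ :=
    exists_malcev_eq_isEtaPair x₀ y₀ (fun t => Z (z ((t - 1) % k + 1))) hk
  have himage :=
    map_malcev (WithOne.mapMulHom f) x₀ y₀ (fun t => Z (z ((t - 1) % k + 1))) (k * c)
  simp only [hZ, WithOne.mapMulHom_coe, malcev_periodic_mul hz, hab, Prod.map,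
    Prod.mk.injEq, WithOne.coe_inj] at himage
  rw [← himage.1, ← himage.2, hS a b hpair]

end EtaPair

theorem Subgroup.index_lt_card_of_ne_bot {K : Type*} [Group K] [Finite K] {H : Subgroup K}
    (hH : H ≠ ⊥) : H.index < Nat.card K := by
  rw [← H.index_mul_card]
  exact lt_mul_of_one_lt_right (Nat.pos_of_ne_zero H.index_ne_zero_of_finite)
    (H.one_lt_card_iff_ne_bot.mpr hH)

theorem exists_mul_mul_ne_of_center_eq_bot {K : Type*} [Group K] (hZ : Subgroup.center K = ⊥)
    {u v : K} (huv : u ≠ v) : ∃ c, u * c * v ≠ v * c * u := by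
  have hcenter : u * v⁻¹ ∉ Subgroup.center K := by
    rw [hZ, Subgroup.mem_bot, mul_inv_eq_one]
    exact huv
  obtain ⟨w, hw⟩ : ∃ w, w * (u * v⁻¹) ≠ u * v⁻¹ * w := by
    simpa [Subgroup.mem_center_iff] using hcenter
  -- `u (v⁻¹ w) v = v (v⁻¹ w) u` says exactly that `w` commutes with `u v⁻¹`
  refine ⟨v⁻¹ * w, fun h => hw ?_⟩
  rw [mul_inv_cancel_left] at h
  have h' : u * v⁻¹ * w = w * u * v⁻¹ :=
    eq_mul_inv_of_mul_eq (by simpa only [mul_assoc] using h)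
  rw [h', mul_assoc]

/-- A centreless nontrivial group has a nontrivial η-pair, so the centre is nontrivial and
induction applies to `K ⧸ center K`. -/
theorem Group.isNilpotent_of_isEtaPair_eq {K : Type*} [Group K] [Finite K]
    (h : ∀ a b : K, IsEtaPair K a b → a = b) : Group.IsNilpotent K := by
  induction hcard : Nat.card K using Nat.strong_induction_on generalizing K with
  | _ c IH =>
  rcases subsingleton_or_nontrivial K with _ | _
  · infer_instance
  have hZ : Subgroup.center K ≠ ⊥ := by
    intro hZ
    obtain ⟨x, hx⟩ := exists_ne (1 : K)
    obtain ⟨a, b, hab, hpair⟩ :=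
      exists_ne_isEtaPair (fun _ _ => exists_mul_mul_ne_of_center_eq_bot hZ) hx
    exact hab (h a b hpair)
  have hquot : ∀ a b : K ⧸ Subgroup.center K, IsEtaPair _ a b → a = b :=
    fun _ _ => eq_of_isEtaPair_of_surjective (QuotientGroup.mk' _).toMulHom
      (QuotientGroup.mk'_surjective _) fun a b hab => by rw [h a b hab]
  exact of_quotient_center_nilpotent
    (IH _ (hcard ▸ Subgroup.index_lt_card_of_ne_bot hZ) hquot rfl)

noncomputable abbrev groupOfLeftIdentity {S : Type*} [Semigroup S] (e : S) (he : ∀ a, e * a = a)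
    (hinv : ∀ a, ∃ b, b * a = e) : Group S :=
  letI : One S := ⟨e⟩
  letI : Inv S := ⟨fun a => (hinv a).choose⟩
  Group.ofLeftAxioms mul_assoc he fun a => (hinv a).choose_spec

namespace ReesMatrixCS

variable {G : Type*} [Group G] {n m : ℕ} {P : Fin m → Fin n → G}

@[simp]
theorem elem_mul_elem (g h : G) (i k : Fin n) (j l : Fin m) :
    (elem g i j : ReesMatrixCS G n m P) * elem h k l = elem (g * P j k * h) i l := rfl

def idem (i : Fin n) (j : Fin m) : ReesMatrixCS G n m P := elem (P j i)⁻¹ i j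

theorem idem_mul_idem_same_row (i : Fin n) (j j' : Fin m) :
    (idem i j : ReesMatrixCS G n m P) * idem i j' = idem i j' := by
  simp [idem]

theorem idem_mul_idem_same_col (i i' : Fin n) (j : Fin m) :
    (idem i j : ReesMatrixCS G n m P) * idem i' j = idem i j := by
  simp [idem, mul_assoc]

theorem etaStar_idem (i i' : Fin n) (j j' : Fin m) :
    etaStar (ReesMatrixCS G n m P) (idem i j) (idem i' j') := by
  have same_row : etaStar _ (idem i j : ReesMatrixCS G n m P) (idem i j') :=
    etaStar_of_isEtaPair <| isEtaPair_of_mul_mul_swap (idem i j)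
      (by simp only [idem_mul_idem_same_row]) (by simp only [idem_mul_idem_same_row])
  have same_col : etaStar _ (idem i j' : ReesMatrixCS G n m P) (idem i' j') :=
    etaStar_of_isEtaPair <| isEtaPair_of_mul_mul_fixed (idem i j')
      (by simp only [idem_mul_idem_same_row, idem_mul_idem_same_col])
      (by simp only [idem_mul_idem_same_col])
  exact (etaStar _).trans same_row same_col

theorem exists_leftIdentity_leftInv (c : Con (ReesMatrixCS G n m P))
    (hc : ∀ i i' j j', c (idem i j) (idem i' j')) (i₀ : Fin n) (j₀ : Fin m) :
    ∃ e : c.Quotient, (∀ q, e * q = q) ∧ ∀ q, ∃ r, r * q = e := by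
  refine ⟨(idem i₀ j₀ : ReesMatrixCS G n m P), fun q => ?_, fun q => ?_⟩
  · induction q using Con.induction_on with
    | H x =>
      obtain ⟨g, i, j⟩ := x
      rw [← (c.eq).mpr (hc i i₀ j₀ j₀), ← Con.coe_mul]
      simp [idem]
  · induction q using Con.induction_on with
    | H x =>
      obtain ⟨g, i, j⟩ := x
      let r : ReesMatrixCS G n m P := elem ((P j i₀)⁻¹ * g⁻¹ * (P j₀ i)⁻¹) i₀ j₀
      have hprod : r * elem g i j = idem i₀ j := by simp [r, idem, mul_assoc]
      refine ⟨r, ?_⟩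
      rw [← Con.coe_mul, hprod, c.eq]
      exact hc i₀ i₀ j j₀

end ReesMatrixCS

/-- If `M = M(G,n,m;P)` is a finite completely simple Rees matrix
semigroup (without zero) over a finite group `G`, then `M/η*` is a finite
nilpotent group. -/
theorem quotient_etaStar_completelySimple (G : Type*) [Group G] [Finite G]
    (n m : ℕ) (hn : 0 < n) (hm : 0 < m) (P : Fin m → Fin n → G) :
    ∃ (H : Type) (_ : Group H) (_ : Finite H), Group.IsNilpotent H ∧
      Nonempty ((etaStar (ReesMatrixCS G n m P)).Quotient ≃* H) := by
  set c := etaStar (ReesMatrixCS G n m P)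
  obtain ⟨e, he, hinv⟩ := ReesMatrixCS.exists_leftIdentity_leftInv c
    ReesMatrixCS.etaStar_idem ⟨0, hn⟩ ⟨0, hm⟩
  let _ := groupOfLeftIdentity e he hinv
  have : Finite c.Quotient := Quotient.finite _
  have hnil : Group.IsNilpotent c.Quotient := Group.isNilpotent_of_isEtaPair_eq fun _ _ =>
    eq_of_isEtaPair_of_surjective c.mkMulHom (fun q => q.induction_on fun x => ⟨x, rfl⟩)
      fun _ _ hab => c.eq.mpr (etaStar_of_isEtaPair hab)
  exact ⟨Shrink.{0} c.Quotient, inferInstance, inferInstance,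
    Group.nilpotent_of_mulEquiv Shrink.mulEquiv.symm, ⟨Shrink.mulEquiv.symm⟩⟩
end

section
/- Let S be a finite semigroup. Then S/η* is a block group all of whose subgroups are nilpotent: every element of S/η* has at most one inverse, and every subsemigroup of S/η* which is a group is a nilpotent group. -/
/-! The whole argument rests on the triviality of every `η_n` on `Q = S/η*`. A Mal'cev cycle
`x = λ_n, y = ρ_n` in `Q` lifts, block by block, to pairs of representatives in `S`; as `S` is
finite these close up into a Mal'cev cycle in `S`, whose ends are `η`-related and hence equal
in `Q`.

If `y` and `y'` are inverses of `x`, then with all `zᵢ = 1` the idempotents `xy, xy'` are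
`η₂`-related, and so are `yx, y'x`; hence `y = yxy = y'xy' = y'`.

A finite group `H` embedded in `Q` inherits the absence of nontrivial Mal'cev cycles. If `H` were
not nilpotent, its upper central series would stop at some `Z ≠ H`. One Mal'cev step with
sandwich `a⁻¹u` replaces `ab⁻¹` by the commutator `⁅u, (ab⁻¹)⁻¹⁆`, which lies outside `Z` for a
suitable `u` whenever `ab⁻¹ ∉ Z`. Iterating, finiteness of `H` yields a Mal'cev cycle with
distinct ends. -/

section Malcev

variable {M N : Type*} [Monoid M] [Monoid N]

theorem malcev_map {F : Type*} [FunLike F M N] [MulHomClass F M N] (f : F) (a b : M)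
    (z : ℕ → M) (k : ℕ) :
    malcev (f a) (f b) (f ∘ z) k = Prod.map f f (malcev a b z k) := by
  induction k with
  | zero => rfl
  | succ k ih => simp [malcev, ih, map_mul]

theorem malcev_add_s11 (a b : M) (z : ℕ → M) (m j : ℕ) :
    malcev a b z (m + j) =
      malcev (malcev a b z m).1 (malcev a b z m).2 (fun i => z (m + i)) j := by
  induction j with
  | zero => rfl
  | succ j ih =>
    show malcev a b z ((m + j) + 1) = _
    simp only [malcev, ih, Nat.add_assoc]

theorem malcev_congr_s11 (a b : M) {z z' : ℕ → M} {k : ℕ}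
    (h : ∀ i, 1 ≤ i → i ≤ k → z i = z' i) : malcev a b z k = malcev a b z' k := by
  induction k with
  | zero => rfl
  | succ k ih =>
    simp only [malcev, ih fun i h₁ h₂ => h i h₁ (Nat.le_succ_of_le h₂),
      h (k + 1) (by omega) le_rfl]

/-- The sandwich is the concatenation of the words `w (F^[k] s)`, `k < t`. -/
theorem malcev_orbit {α : Type*} (g : α → M × M) (F : α → α) {n : ℕ} (hn : 0 < n)
    (w : α → ℕ → M) (hw : ∀ s, malcev (g s).1 (g s).2 (w s) n = g (F s)) (s : α) (t : ℕ) :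
    malcev (g s).1 (g s).2 (fun j => w (F^[(j - 1) / n] s) ((j - 1) % n + 1)) (n * t) =
      g (F^[t] s) := by
  induction t with
  | zero => rfl
  | succ t ih =>
    rw [Nat.mul_succ, malcev_add_s11, ih, Function.iterate_succ_apply', ← hw]
    refine malcev_congr_s11 _ _ fun i h₁ h₂ => ?_
    have hi : n * t + i - 1 = n * t + (i - 1) := by omega
    rw [hi, Nat.mul_add_div hn, Nat.mul_add_mod, Nat.div_eq_of_lt (by omega),
      Nat.mod_eq_of_lt (by omega), Nat.add_zero, Nat.sub_add_cancel h₁]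

/-- The orbit of `s₀` reaches a periodic state; going twice around its cycle makes the
length exceed `1`. -/
theorem exists_malcev_cycle {α : Type*} [Finite α] (g : α → M × M) (F : α → α) {n : ℕ}
    (hn : 0 < n) (w : α → ℕ → M) (hw : ∀ s, malcev (g s).1 (g s).2 (w s) n = g (F s))
    (s₀ : α) : ∃ s z N, 1 < N ∧ malcev (g s).1 (g s).2 z N = g s := by
  obtain ⟨p, q, hpq, heq⟩ : ∃ p q, p < q ∧ F^[p] s₀ = F^[q] s₀ := by
    obtain ⟨i, j, hij, h⟩ := Finite.exists_ne_map_eq_of_infinite fun k => F^[k] s₀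
    rcases hij.lt_or_gt with hlt | hlt
    exacts [⟨i, j, hlt, h⟩, ⟨j, i, hlt, h.symm⟩]
  have hper : Function.IsPeriodicPt F (q - p) (F^[p] s₀) := by
    rw [Function.IsPeriodicPt, Function.IsFixedPt, ← Function.iterate_add_apply,
      Nat.sub_add_cancel hpq.le, heq]
  have hcycle := malcev_orbit g F hn w hw (F^[p] s₀) ((q - p) * 2)
  rw [(hper.mul_const 2).eq] at hcycle
  refine ⟨_, _, _, ?_, hcycle⟩
  have : 0 < n * (q - p) := Nat.mul_pos hn (Nat.sub_pos_of_lt hpq)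
  rw [← Nat.mul_assoc]
  omega

end Malcev

section Semigroup

variable {S : Type*} [Semigroup S]

theorem exists_malcev_coe_eq (a b : S) (z : ℕ → WithOne S) (k : ℕ) :
    ∃ s t : S, malcev (a : WithOne S) b z k = (↑s, ↑t) := by
  induction k with
  | zero => exact ⟨a, b, rfl⟩
  | succ k ih =>
    obtain ⟨s, t, h⟩ := ih
    simp only [malcev, h]
    cases z (k + 1) with
    | one => exact ⟨s * t, t * s, by simp⟩
    | coe c => exact ⟨s * c * t, t * c * s, by simp [← WithOne.coe_mul]⟩

theorem etaStar_of_etaN {n : ℕ} (hn : 1 ≤ n) {a b : S} (h : etaN S n a b) : etaStar S a b :=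
  ConGen.Rel.of _ _ (Relation.TransGen.single ⟨n, hn, h⟩)

theorem eq_of_etaN_etaStar_quotient [Finite S] {n : ℕ} {x y : (etaStar S).Quotient}
    (h : etaN _ n x y) : x = y := by
  rcases h with ⟨-, rfl⟩ | ⟨hn, zq, hx, hy⟩
  · rfl
  let π := WithOne.mapMulHom (etaStar S).mkMulHom
  have hπ (s : S) : π s = ((s : (etaStar S).Quotient) : WithOne _) := rfl
  have hπ_surj : Function.Surjective π := by
    rintro (_ | q)
    · exact ⟨1, map_one π⟩
    · obtain ⟨s, rfl⟩ := Quotient.exists_rep q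
      exact ⟨s, rfl⟩
  choose zl hzl using fun i => hπ_surj (zq i)
  have hzq : malcev (x : WithOne _) y zq n = ((x : WithOne _), (y : WithOne _)) :=
    Prod.ext hx.symm hy.symm
  let α := {p : S × S // (p.1 : (etaStar S).Quotient) = x ∧ (p.2 : (etaStar S).Quotient) = y}
  let g : α → WithOne S × WithOne S := fun p => (p.1.1, p.1.2)
  have hstep (p : α) : ∃ p' : α, malcev (g p).1 (g p).2 zl n = g p' := by
    obtain ⟨s, t, hst⟩ := exists_malcev_coe_eq p.1.1 p.1.2 zl n
    have hmap := malcev_map π (p.1.1 : WithOne S) p.1.2 zl n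
    rw [hπ, hπ, p.2.1, p.2.2, show π ∘ zl = zq from funext hzl, hzq, hst] at hmap
    simp only [Prod.map, hπ, Prod.mk.injEq, WithOne.coe_inj] at hmap
    exact ⟨⟨(s, t), hmap.1.symm, hmap.2.symm⟩, hst⟩
  choose F hF using hstep
  obtain ⟨x₀, hx₀⟩ := Quotient.exists_rep x
  obtain ⟨y₀, hy₀⟩ := Quotient.exists_rep y
  obtain ⟨⟨⟨a, b⟩, ha, hb⟩, z, N, hN, hcycle⟩ :=
    exists_malcev_cycle g F (by omega) (fun _ => zl) hF ⟨(x₀, y₀), hx₀, hy₀⟩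
  have hab : etaN S N a b :=
    Or.inr ⟨hN, z, (congrArg Prod.fst hcycle).symm, (congrArg Prod.snd hcycle).symm⟩
  rw [← ha, ← hb]
  exact (Con.eq _).2 (etaStar_of_etaN hN.le hab)

theorem etaN_two_of_mul_mul {e f : S} (he : e * f * (f * e) = e)
    (hf : f * e * (e * f) = f) : etaN S 2 e f := by
  refine Or.inr ⟨one_lt_two, fun _ => 1, ?_, ?_⟩ <;>
    simp only [malcev, mul_one, ← WithOne.coe_mul, he, hf]

theorem inverse_unique_of_etaN_two
    (hη : ∀ a b : S, etaN S 2 a b → a = b) {x y y' : S} (h₁ : x * y * x = x)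
    (h₂ : y * x * y = y) (h₁' : x * y' * x = x) (h₂' : y' * x * y' = y') : y = y' := by
  have hl : x * y * (x * y') = x * y' := by rw [← mul_assoc, h₁]
  have hl' : x * y' * (x * y) = x * y := by rw [← mul_assoc, h₁']
  have hr : y * x * (y' * x) = y * x := by rw [mul_assoc, ← mul_assoc x, h₁']
  have hr' : y' * x * (y * x) = y' * x := by rw [mul_assoc, ← mul_assoc x, h₁]
  have hxy : x * y = x * y' :=
    hη _ _ (etaN_two_of_mul_mul (by rw [hl, hl', hl']) (by rw [hl', hl, hl]))
  have hyx : y * x = y' * x :=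
    hη _ _ (etaN_two_of_mul_mul (by rw [hr, hr', hr]) (by rw [hr', hr, hr']))
  calc y = y * x * y := h₂.symm
    _ = y' * (x * y) := by rw [hyx, mul_assoc]
    _ = y' * x * y' := by rw [hxy, mul_assoc]
    _ = y' := h₂'

end Semigroup

section Group

open scoped commutatorElement

variable {H : Type*} [Group H]

theorem exists_upperCentralSeries_succ_eq [Finite H] :
    ∃ N, Subgroup.upperCentralSeries H (N + 1) = Subgroup.upperCentralSeries H N := by
  obtain ⟨N, hN⟩ := WellFoundedGT.monotone_chain_condition
    ⟨Subgroup.upperCentralSeries H, Subgroup.upperCentralSeries_mono H⟩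
  exact ⟨N, (hN (N + 1) N.le_succ).symm⟩

theorem exists_commutatorElement_inv_notMem_upperCentralSeries {N : ℕ}
    (hN : Subgroup.upperCentralSeries H (N + 1) = Subgroup.upperCentralSeries H N) {c : H}
    (hc : c ∉ Subgroup.upperCentralSeries H N) :
    ∃ u : H, ⁅u, c⁻¹⁆ ∉ Subgroup.upperCentralSeries H N := by
  by_contra! h
  refine hc (inv_mem_iff.1 (hN ▸ Subgroup.mem_upperCentralSeries_succ_iff.2 fun u => ?_))
  rw [← commutatorElement_inv]
  exact inv_mem (h u)

theorem malcev_one_mul_inv (a b : H) (z : ℕ → H) :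
    (malcev a b z 1).1 * (malcev a b z 1).2⁻¹ = ⁅a * z 1, (a * b⁻¹)⁻¹⁆ := by
  simp only [malcev, commutatorElement_def]
  group

theorem Group.isNilpotent_of_malcev_cycle [Finite H]
    (h : ∀ (a b : H) (z : ℕ → H) (N : ℕ), 1 < N → malcev a b z N = (a, b) → a = b) :
    Group.IsNilpotent H := by
  obtain ⟨N, hN⟩ := exists_upperCentralSeries_succ_eq (H := H)
  by_contra hnil
  obtain ⟨v, hv⟩ : ∃ v, v ∉ Subgroup.upperCentralSeries H N := by
    by_contra! hall
    exact hnil ⟨N, (Subgroup.eq_top_iff' _).2 hall⟩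
  choose u hu using fun c : {c // c ∉ Subgroup.upperCentralSeries H N} =>
    exists_commutatorElement_inv_notMem_upperCentralSeries hN c.2
  let α := {p : H × H // p.1 * p.2⁻¹ ∉ Subgroup.upperCentralSeries H N}
  let w : α → ℕ → H := fun p _ => p.1.1⁻¹ * u ⟨_, p.2⟩
  let F : α → α := fun p => ⟨malcev p.1.1 p.1.2 (w p) 1, by
    rw [malcev_one_mul_inv, mul_inv_cancel_left]
    exact hu _⟩
  obtain ⟨⟨⟨a, b⟩, hab⟩, z, M, hM, hcycle⟩ :=
    exists_malcev_cycle Subtype.val F one_pos w (fun _ => rfl) ⟨(v, 1), by simpa using hv⟩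
  exact hab (by rw [h a b z M hM hcycle, mul_inv_cancel]; exact one_mem _)

end Group

/-- For a finite semigroup `S`, the quotient `S/η*` is a block
group (every element has at most one inverse) and every subsemigroup of `S/η*`
which is a group is a nilpotent group. -/
theorem quotient_etaStar_blockGroup_nilpotentSubgroups
    (S : Type*) [Semigroup S] [Finite S] :
    (∀ x y y' : (etaStar S).Quotient,
      (x * y * x = x ∧ y * x * y = y) →
      (x * y' * x = x ∧ y' * x * y' = y') → y = y') ∧
    (∀ (H : Type*) [Group H] (f : H →ₙ* (etaStar S).Quotient),
      Function.Injective f → Group.IsNilpotent H) := by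
  refine ⟨fun x y y' ⟨h₁, h₂⟩ ⟨h₁', h₂'⟩ =>
    inverse_unique_of_etaN_two (fun _ _ => eq_of_etaN_etaStar_quotient) h₁ h₂ h₁' h₂', ?_⟩
  intro H _ f hf
  have : Finite (etaStar S).Quotient := Finite.of_surjective _ Quotient.mk''_surjective
  have : Finite H := Finite.of_injective f hf
  refine Group.isNilpotent_of_malcev_cycle fun a b z N hN hcycle =>
    hf (eq_of_etaN_etaStar_quotient (n := N) (Or.inr ?_))
  let φ := WithOne.coeMulHom.comp f
  have hmap := malcev_map φ a b z N
  rw [hcycle] at hmap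
  exact ⟨hN, φ ∘ z, (congrArg Prod.fst hmap).symm, (congrArg Prod.snd hmap).symm⟩
end

section
/- Let S and T be finite semigroups in which every subsemigroup generated by two elements is Mal'cev nilpotent. Then every subsemigroup of the direct product S × T generated by two elements is Mal'cev nilpotent. -/
/-! Both projections of `S × T`, extended to `WithOne`, are monoid homomorphisms commuting with
the Mal'cev words, and together they separate points; so an identity `λ_n = ρ_n` holding in `S`
and in `T` (after raising to a common `n`, using that `λ_n = ρ_n` forces `λ_{n+1} = ρ_{n+1}`)
holds in `S × T`, and then in the subsemigroup `⟨a, b⟩ ≤ ⟨a₁, b₁⟩ × ⟨a₂, b₂⟩`. -/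

section Malcev

variable {M N : Type*} [Monoid M] [Monoid N]

theorem map_malcev_s13 (f : M →* N) (x y : M) (z : ℕ → M) (k : ℕ) :
    Prod.map f f (malcev x y z k) = malcev (f x) (f y) (f ∘ z) k := by
  induction k with
  | zero => rfl
  | succ k ih =>
    rw [malcev, malcev, ← ih]
    simp only [Prod.map, map_mul, Function.comp_apply]

theorem malcev_fst_eq_snd_of_le {x y : M} {z : ℕ → M} {n m : ℕ} (hnm : n ≤ m)
    (h : (malcev x y z n).1 = (malcev x y z n).2) :
    (malcev x y z m).1 = (malcev x y z m).2 := by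
  induction m, hnm using Nat.le_induction with
  | base => exact h
  | succ m _ ih => simp only [malcev, ih]

end Malcev

def SatisfiesMalcevIdentity (S : Type*) [Semigroup S] (n : ℕ) : Prop :=
  ∀ (a b : S) (z : ℕ → WithOne S),
    (malcev (a : WithOne S) (b : WithOne S) z n).1 =
    (malcev (a : WithOne S) (b : WithOne S) z n).2

theorem WithOne.ext_of_mapMulHom_fst_snd {S T : Type*} [Mul S] [Mul T] {u v : WithOne (S × T)}
    (h₁ : WithOne.mapMulHom (MulHom.fst S T) u = WithOne.mapMulHom (MulHom.fst S T) v)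
    (h₂ : WithOne.mapMulHom (MulHom.snd S T) u = WithOne.mapMulHom (MulHom.snd S T) v) :
    u = v := by
  induction u using WithOne.recOneCoe <;> induction v using WithOne.recOneCoe
  · rfl
  · exact absurd h₁.symm WithOne.coe_ne_one
  · exact absurd h₁ WithOne.coe_ne_one
  · simp only [WithOne.mapMulHom_coe, WithOne.coe_inj] at h₁ h₂
    exact congrArg _ (Prod.ext h₁ h₂)

namespace SatisfiesMalcevIdentity

variable {S T : Type*} [Semigroup S] [Semigroup T]

theorem mono {n m : ℕ} (h : SatisfiesMalcevIdentity S n) (hnm : n ≤ m) :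
    SatisfiesMalcevIdentity S m :=
  fun a b z => malcev_fst_eq_snd_of_le hnm (h a b z)

theorem mapMulHom_malcev_fst_eq_snd {n : ℕ} (f : S →ₙ* T) (hT : SatisfiesMalcevIdentity T n)
    (a b : S) (z : ℕ → WithOne S) :
    WithOne.mapMulHom f (malcev (a : WithOne S) (b : WithOne S) z n).1 =
    WithOne.mapMulHom f (malcev (a : WithOne S) (b : WithOne S) z n).2 := by
  obtain ⟨h₁, h₂⟩ := Prod.ext_iff.mp (map_malcev_s13 (WithOne.mapMulHom f) a b z n)
  exact h₁.trans ((hT (f a) (f b) _).trans h₂.symm)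

theorem of_injective {n : ℕ} (f : S →ₙ* T) (hf : Function.Injective f)
    (hT : SatisfiesMalcevIdentity T n) : SatisfiesMalcevIdentity S n :=
  fun a b z => WithOne.mapMulHom_injective hf (mapMulHom_malcev_fst_eq_snd f hT a b z)

theorem prod {n : ℕ} (hS : SatisfiesMalcevIdentity S n) (hT : SatisfiesMalcevIdentity T n) :
    SatisfiesMalcevIdentity (S × T) n :=
  fun a b z => WithOne.ext_of_mapMulHom_fst_snd
    (mapMulHom_malcev_fst_eq_snd (MulHom.fst S T) hS a b z)
    (mapMulHom_malcev_fst_eq_snd (MulHom.snd S T) hT a b z)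

end SatisfiesMalcevIdentity

namespace MalcevNilpotent

variable {S T : Type*} [Semigroup S] [Semigroup T]

theorem of_injective (f : S →ₙ* T) (hf : Function.Injective f) (hT : MalcevNilpotent T) :
    MalcevNilpotent S :=
  let ⟨n, hn, hT⟩ := hT
  ⟨n, hn, SatisfiesMalcevIdentity.of_injective f hf hT⟩

theorem prod (hS : MalcevNilpotent S) (hT : MalcevNilpotent T) : MalcevNilpotent (S × T) :=
  let ⟨n₁, hn₁, hS⟩ := hS
  let ⟨n₂, _, hT⟩ := hT
  ⟨max n₁ n₂, lt_max_of_lt_left hn₁,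
    SatisfiesMalcevIdentity.prod (.mono hS (le_max_left n₁ n₂)) (.mono hT (le_max_right n₁ n₂))⟩

end MalcevNilpotent

theorem Subsemigroup.closure_pair_le_prod {S T : Type*} [Mul S] [Mul T] (a b : S × T) :
    closure {a, b} ≤ (closure {a.1, b.1}).prod (closure {a.2, b.2}) := by
  rw [closure_le, Set.pair_subset_iff]
  exact ⟨⟨subset_closure (.inl rfl), subset_closure (.inl rfl)⟩,
    ⟨subset_closure (.inr rfl), subset_closure (.inr rfl)⟩⟩

theorem Subsemigroup.inclusion_injective {M : Type*} [Mul M] {s t : Subsemigroup M} (h : s ≤ t) :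
    Function.Injective (inclusion h) :=
  fun _ _ huv => Subtype.ext (congrArg Subtype.val huv :)

theorem two_generated_nilpotent_prod_general
    {S T : Type*} [Semigroup S] [Semigroup T]
    (hS : ∀ a b : S, MalcevNilpotent (Subsemigroup.closure {a, b}))
    (hT : ∀ a b : T, MalcevNilpotent (Subsemigroup.closure {a, b}))
    (a b : S × T) : MalcevNilpotent (Subsemigroup.closure {a, b}) := by
  have hle := Subsemigroup.closure_pair_le_prod a b
  exact ((hS a.1 b.1).prod (hT a.2 b.2)).of_injective
    ((Subsemigroup.prodEquiv _ _).toMulHom.comp (Subsemigroup.inclusion hle))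
    ((Subsemigroup.prodEquiv _ _).injective.comp (Subsemigroup.inclusion_injective hle))

/-- If `S` and `T` are finite semigroups in which every
two-generated subsemigroup is Mal'cev nilpotent, then every two-generated
subsemigroup of `S × T` is Mal'cev nilpotent. -/
theorem two_generated_nilpotent_prod
    {S T : Type*} [Semigroup S] [Semigroup T] [Finite S] [Finite T]
    (hS : ∀ a b : S, MalcevNilpotent (Subsemigroup.closure {a, b}))
    (hT : ∀ a b : T, MalcevNilpotent (Subsemigroup.closure {a, b}))
    (a b : S × T) : MalcevNilpotent (Subsemigroup.closure {a, b}) :=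
  two_generated_nilpotent_prod_general hS hT a b
end
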